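/- Let f₁,…,f_r ∈ ℚ_p[x₁,…,x_n] be polynomials such that any relation a₀ + Σ_{i=1}^r a_i f_i = 0 with a_i ∈ ℚ_p forces a₀ = a₁ = ⋯ = a_r = 0 (i.e. 1, f₁, …, f_r are linearly independent over ℚ_p). Then there exists N ∈ ℕ such that for every u ∈ ℤ_p^r with max_i |u_i| = 1, the quantity e(u·f) ≤ N, where e(g) denotes the minimal p-adic valuation of the coefficients of g(x) - g(0) and u·f = Σ u_i f_i. -/
import Mathlib


/-- if `1, f₁, …, f_r` are linearly independent over `ℚ_p`, then
`e(u·f)` is bounded uniformly over `u ∈ ℤ_p^r` with `max|uᵢ| = 1`: some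
nonconstant coefficient of `u·f` has norm at least `p^{-N}`. -/
theorem stmt9 {p : ℕ} [Fact p.Prime] (n r : ℕ)
    (f : Fin r → MvPolynomial (Fin n) ℚ_[p])
    (hindep : ∀ (a₀ : ℚ_[p]) (a : Fin r → ℚ_[p]),
      MvPolynomial.C a₀ + ∑ i, MvPolynomial.C (a i) * f i = 0 →
        a₀ = 0 ∧ ∀ i, a i = 0) :
    ∃ N : ℕ, ∀ u : Fin r → ℤ_[p], (∃ i, ‖u i‖ = 1) →
      ∃ k : Fin n →₀ ℕ, k ≠ 0 ∧
        (p : ℝ) ^ (-(N : ℤ)) ≤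
          ‖MvPolynomial.coeff k (∑ i, MvPolynomial.C ((u i : ℚ_[p])) * f i)‖ := by
  classical
  by_cases hK : ∃ u : Fin r → ℤ_[p], ∃ i, ‖u i‖ = 1
  swap
  · exact ⟨0, fun u hu => absurd ⟨u, hu⟩ hK⟩
  have hp1 : (1 : ℝ) < (p : ℝ) := by
    exact_mod_cast (Fact.out : p.Prime).one_lt
  set S : Finset (Fin n →₀ ℕ) := (Finset.univ.biUnion fun i => (f i).support).erase 0 with hS
  set c : (Fin n →₀ ℕ) → (Fin r → ℤ_[p]) → ℚ_[p] :=
    fun k u => ∑ i, (u i : ℚ_[p]) * MvPolynomial.coeff k (f i) with hc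
  have hcoeff : ∀ k u, MvPolynomial.coeff k (∑ i, MvPolynomial.C ((u i : ℚ_[p])) * f i) = c k u := by
    intro k u
    simp [hc, MvPolynomial.coeff_sum, MvPolynomial.coeff_C_mul]
  -- the map into the finite product, with sup norm
  set Φ : (Fin r → ℤ_[p]) → (S → ℚ_[p]) := fun u k => c k.1 u with hΦ
  have hcont : Continuous Φ := by
    refine continuous_pi fun k => ?_
    refine continuous_finset_sum _ fun i _ => ?_
    exact (continuous_subtype_val.comp (continuous_apply i)).mul continuous_const
  set K : Set (Fin r → ℤ_[p]) := {u | ∃ i, ‖u i‖ = 1} with hKdef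
  have hKclosed : IsClosed K := by
    have : K = ⋃ i, {u : Fin r → ℤ_[p] | ‖u i‖ = 1} := by
      ext u; simp [hKdef, Set.mem_iUnion]
    rw [this]
    exact isClosed_iUnion_of_finite fun i =>
      isClosed_eq (continuous_norm.comp (continuous_apply i)) continuous_const
  have hKcomp : IsCompact K := hKclosed.isCompact
  obtain ⟨u₀, hu₀K, hmin⟩ := hKcomp.exists_isMinOn hK
    ((continuous_norm.comp hcont).continuousOn)
  set m : ℝ := ‖Φ u₀‖ with hm
  -- m > 0
  have hm0 : 0 < m := by
    rcases (norm_nonneg (Φ u₀)).lt_or_eq with h | h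
    · exact h
    have hzero : Φ u₀ = 0 := by
      rwa [eq_comm, norm_eq_zero] at h
    exfalso
    -- all nonconstant coefficients of g vanish
    set g : MvPolynomial (Fin n) ℚ_[p] := ∑ i, MvPolynomial.C ((u₀ i : ℚ_[p])) * f i with hg
    have hvanish : ∀ k : Fin n →₀ ℕ, k ≠ 0 → MvPolynomial.coeff k g = 0 := by
      intro k hk
      by_cases hkS : k ∈ S
      · have := congrFun hzero ⟨k, hkS⟩
        rw [hg, hcoeff]
        exact this
      · rw [hg, hcoeff, hc]
        refine Finset.sum_eq_zero fun i _ => ?_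
        have : k ∉ (f i).support := by
          intro hmem
          exact hkS (Finset.mem_erase.2 ⟨hk, Finset.mem_biUnion.2 ⟨i, Finset.mem_univ i, hmem⟩⟩)
        rw [MvPolynomial.notMem_support_iff] at this
        rw [this, mul_zero]
    have hrel : MvPolynomial.C (-(MvPolynomial.coeff 0 g)) + ∑ i, MvPolynomial.C ((u₀ i : ℚ_[p])) * f i = 0 := by
      rw [← hg]
      ext k
      by_cases hk : k = 0
      · subst hk
        simp [MvPolynomial.coeff_zero]
      · simp [MvPolynomial.coeff_add, MvPolynomial.coeff_C, Ne.symm hk, hvanish k hk]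
    obtain ⟨-, ha⟩ := hindep _ _ hrel
    obtain ⟨i, hi⟩ := hu₀K
    have : (u₀ i : ℚ_[p]) = 0 := ha i
    rw [show ‖u₀ i‖ = ‖(u₀ i : ℚ_[p])‖ from (PadicInt.padic_norm_e_of_padicInt _).symm, this] at hi
    simp at hi
  -- choose N with p^{-N} ≤ m
  obtain ⟨N, hN⟩ : ∃ N : ℕ, (p : ℝ) ^ (-(N : ℤ)) ≤ m := by
    obtain ⟨N, hN⟩ := exists_pow_lt_of_lt_one hm0 (by
      rw [div_lt_one (by linarith)]; linarith : (1 : ℝ) / p < 1)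
    refine ⟨N, le_of_lt ?_⟩
    rw [zpow_neg, zpow_natCast, ← one_div, ← one_div_pow]
    exact hN
  refine ⟨N, fun u hu => ?_⟩
  have huK : u ∈ K := hu
  have hmu : m ≤ ‖Φ u‖ := hmin huK
  have : ∃ k ∈ S, m ≤ ‖c k u‖ := by
    by_contra h
    push_neg at h
    have : ‖Φ u‖ < m := by
      rw [pi_norm_lt_iff hm0]
      intro k
      exact h k.1 k.2
    linarith
  obtain ⟨k, hkS, hk⟩ := this
  refine ⟨k, (Finset.mem_erase.1 hkS).1, ?_⟩
  rw [hcoeff]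
  exact le_trans hN (le_trans hk (le_refl _))
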